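/- Let φ be the structure function of a semicoherent system on n components with minimal cut sets K₁,…,K_s. Then for every k with 1 ≤ k ≤ n, d^D_k = ∑_{∅ ≠ B ⊆ {1,…,s}, |⋃_{j∈B} K_j| = k} (−1)^{|B|−1}, where the sum is over all nonempty subsets B of {1,…,s} whose corresponding union of minimal cut sets has exactly k elements. -/

import Mathlib

open Finset

/-- The coefficients of the simple (multilinear) form of a structure function:
`d(A) = ∑_{B ⊆ A} (−1)^{|A|−|B|} φ(B)`. -/
def dCoef {n : ℕ} (φ : Finset (Fin n) → ℚ) (A : Finset (Fin n)) : ℚ :=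
  ∑ B ∈ A.powerset, (-1 : ℚ) ^ (A.card - B.card) * φ B

/-- The dual structure function `φᴰ(A) = 1 − φ([n]∖A)`. -/
def dualFun {n : ℕ} (φ : Finset (Fin n) → ℚ) (A : Finset (Fin n)) : ℚ :=
  1 - φ Aᶜ

/-- `d_k = ∑_{A ⊆ [n], |A| = k} d(A)`. -/
def dk {n : ℕ} (φ : Finset (Fin n) → ℚ) (k : ℕ) : ℚ :=
  ∑ A ∈ (Finset.univ : Finset (Fin n)).powerset.filter (fun A => A.card = k), dCoef φ A

/-! The dual structure function is the indicator of "A contains some minimal cut set", i.e. of the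
union of the up-sets `{A | K j ⊆ A}`. The intersection of the up-sets indexed by `B` is the up-set
of `⋃_{j ∈ B} K j`, so inclusion–exclusion writes `φᴰ` as
`∑_{B ≠ ∅} (−1)^{|B|−1} [⋃_{j∈B} K j ⊆ ·]`.
The coefficient transform `d` is linear and sends the indicator of `U ⊆ ·` to the point mass at
`U`, so `dᴰ(A)` collects the signs of exactly those `B` whose union is `A`. -/

section Combinatorics

variable {α ι R : Type*} [DecidableEq α] [CommRing R]

lemma sum_Icc_neg_one_pow_card_sub (U A : Finset α) :
    ∑ C ∈ Icc U A, (-1 : R) ^ (#A - #C) = if A = U then 1 else 0 := by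
  by_cases hUA : U ⊆ A
  · have hbij : ∑ C ∈ Icc U A, (-1 : R) ^ (#A - #C) = ∑ D ∈ (A \ U).powerset, (-1 : R) ^ #D := by
      refine sum_nbij' (A \ ·) (A \ ·) ?_ ?_ ?_ ?_ ?_
      · intro C hC
        exact mem_powerset.2 (sdiff_subset_sdiff subset_rfl (mem_Icc.1 hC).1)
      · intro D hD
        rw [mem_powerset, subset_sdiff] at hD
        exact mem_Icc.2 ⟨subset_sdiff.2 ⟨hUA, hD.2.symm⟩, sdiff_subset⟩
      · intro C hC
        exact Finset.sdiff_sdiff_eq_self (mem_Icc.1 hC).2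
      · intro D hD
        exact Finset.sdiff_sdiff_eq_self ((mem_powerset.1 hD).trans sdiff_subset)
      · intro C hC
        rw [card_sdiff_of_subset (mem_Icc.1 hC).2]
    have hsum := congrArg (Int.cast (R := R)) (sum_powerset_neg_one_pow_card (x := A \ U))
    push_cast at hsum
    rw [hbij, hsum]
    exact if_congr (sdiff_eq_empty_iff_subset.trans ⟨fun h => h.antisymm hUA, fun h => h.le⟩)
      rfl rfl
  · rw [Icc_eq_empty (fun h => hUA h), sum_empty, if_neg (fun h => hUA h.ge)]

lemma ite_exists_subset_eq_sum (s : Finset ι) (K : ι → Finset α) (A : Finset α) :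
    (if ∃ j ∈ s, K j ⊆ A then (1 : R) else 0) =
      ∑ t ∈ s.powerset with t.Nonempty,
        (-1 : R) ^ (#t - 1) * if t.biUnion K ⊆ A then 1 else 0 := by
  have h := indicator_biUnion_eq_sum_powerset s (fun j => {B : Finset α | K j ⊆ B})
    (1 : Finset α → R) A
  classical
  simp only [Set.indicator_apply, Set.mem_iUnion₂, Set.mem_iInter₂, Set.mem_ofPred_eq,
    Pi.one_apply, exists_prop] at h
  rw [h]
  refine sum_congr rfl fun t ht => ?_
  obtain ⟨m, hm⟩ := Nat.exists_eq_add_one_of_ne_zero (card_pos.2 (mem_filter.1 ht).2).ne'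
  simp only [biUnion_subset, hm, Nat.add_sub_cancel, pow_succ]
  rw [zsmul_eq_mul]
  push_cast
  ring

end Combinatorics

section Dual

variable {n : ℕ} {ι : Type*}

lemma dCoef_ite_subset (U A : Finset (Fin n)) :
    dCoef (fun C => if U ⊆ C then 1 else 0) A = if A = U then 1 else 0 := by
  rw [dCoef, ← sum_Icc_neg_one_pow_card_sub, Icc_eq_filter_powerset, sum_filter]
  simp only [mul_ite, mul_one, mul_zero]

lemma dCoef_sum_mul (T : Finset ι) (c : ι → ℚ) (f : ι → Finset (Fin n) → ℚ)
    (A : Finset (Fin n)) :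
    dCoef (fun C => ∑ i ∈ T, c i * f i C) A = ∑ i ∈ T, c i * dCoef (f i) A := by
  simp only [dCoef, mul_sum]
  rw [sum_comm]
  exact sum_congr rfl fun _ _ => sum_congr rfl fun _ _ => by ring

lemma dk_eq_sum_of_dCoef_eq {ψ : Finset (Fin n) → ℚ} (T : Finset ι) (c : ι → ℚ)
    (U : ι → Finset (Fin n)) (h : ∀ A, dCoef ψ A = ∑ i ∈ T, c i * if A = U i then 1 else 0)
    (k : ℕ) : dk ψ k = ∑ i ∈ T with #(U i) = k, c i := by
  simp only [dk, h]
  rw [sum_comm, sum_filter]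
  refine sum_congr rfl fun i _ => ?_
  rw [← mul_sum, sum_ite_eq']
  simp

variable {s : ℕ} {φ : Finset (Fin n) → ℚ} {K : Fin s → Finset (Fin n)}

lemma exists_subset_of_cut (h01 : ∀ A, φ A = 0 ∨ φ A = 1)
    (hK : ∀ A : Finset (Fin n), (∃ j, K j = A) ↔ (φ Aᶜ = 0 ∧ ∀ A' ⊂ A, φ A'ᶜ = 1))
    {A : Finset (Fin n)} (hA : φ Aᶜ = 0) : ∃ j, K j ⊆ A := by
  obtain ⟨B, hBA, hB⟩ := exists_minimal_le_of_wellFoundedLT (fun B => φ Bᶜ = 0) A hA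
  have hBmin : ∀ B' ⊂ B, φ B'ᶜ = 1 := fun B' hB' => (h01 _).resolve_left (hB.not_prop_of_lt hB')
  obtain ⟨j, rfl⟩ := (hK B).2 ⟨hB.prop, hBmin⟩
  exact ⟨j, hBA⟩

lemma dualFun_eq_ite (h01 : ∀ A, φ A = 0 ∨ φ A = 1)
    (hmono : ∀ A B : Finset (Fin n), A ⊆ B → φ A ≤ φ B)
    (hK : ∀ A : Finset (Fin n), (∃ j, K j = A) ↔ (φ Aᶜ = 0 ∧ ∀ A' ⊂ A, φ A'ᶜ = 1))
    (A : Finset (Fin n)) : dualFun φ A = if ∃ j, K j ⊆ A then 1 else 0 := by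
  split_ifs with hA
  · obtain ⟨j, hj⟩ := hA
    have hle : φ Aᶜ ≤ 0 := ((hK (K j)).1 ⟨j, rfl⟩).1 ▸ hmono _ _ (compl_subset_compl.2 hj)
    have hcut : φ Aᶜ = 0 := (h01 _).resolve_right fun h => by linarith
    simp [dualFun, hcut]
  · have hnot : φ Aᶜ = 1 := (h01 _).resolve_left fun h => hA (exists_subset_of_cut h01 hK h)
    simp [dualFun, hnot]

end Dual

theorem dual_dk_eq_incl_excl_min_cut_sets_general
    (n s : ℕ)
    (φ : Finset (Fin n) → ℚ)
    (h01 : ∀ A, φ A = 0 ∨ φ A = 1)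
    (hmono : ∀ A B : Finset (Fin n), A ⊆ B → φ A ≤ φ B)
    (K : Fin s → Finset (Fin n))
    (hK : ∀ A : Finset (Fin n),
      (∃ j, K j = A) ↔ (φ Aᶜ = 0 ∧ ∀ A' ⊂ A, φ A'ᶜ = 1)) :
    ∀ k : ℕ, 1 ≤ k → k ≤ n →
      dk (dualFun φ) k = ∑ B ∈ (Finset.univ : Finset (Fin s)).powerset.filter
          (fun B => B.Nonempty ∧ (B.biUnion K).card = k),
          (-1 : ℚ) ^ (B.card - 1) := by
  intro k _ _
  have hdual : dualFun φ = fun A => ∑ B ∈ (univ : Finset (Fin s)).powerset with B.Nonempty,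
      (-1 : ℚ) ^ (#B - 1) * if B.biUnion K ⊆ A then 1 else 0 := by
    funext A
    rw [dualFun_eq_ite h01 hmono hK, ← ite_exists_subset_eq_sum]
    simp
  have hcoef : ∀ A, dCoef (dualFun φ) A = ∑ B ∈ (univ : Finset (Fin s)).powerset with B.Nonempty,
      (-1 : ℚ) ^ (#B - 1) * if A = B.biUnion K then 1 else 0 := by
    intro A
    rw [hdual, dCoef_sum_mul]
    simp only [dCoef_ite_subset]
  rw [dk_eq_sum_of_dCoef_eq _ _ _ hcoef, filter_filter]

/-- If `K₁,…,K_s` are the minimal cut sets of a semicoherent system `φ`,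
then for `1 ≤ k ≤ n`, `dᴰ_k = ∑_{∅ ≠ B ⊆ [s], |⋃_{j∈B} K_j| = k} (−1)^{|B|−1}`. -/
theorem dual_dk_eq_incl_excl_min_cut_sets
    (n s : ℕ) (hn : 1 ≤ n)
    (φ : Finset (Fin n) → ℚ)
    (h01 : ∀ A, φ A = 0 ∨ φ A = 1)
    (hmono : ∀ A B : Finset (Fin n), A ⊆ B → φ A ≤ φ B)
    (hempty : φ ∅ = 0) (hfull : φ Finset.univ = 1)
    (K : Fin s → Finset (Fin n)) (hKinj : Function.Injective K)
    (hK : ∀ A : Finset (Fin n),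
      (∃ j, K j = A) ↔ (φ Aᶜ = 0 ∧ ∀ A' ⊂ A, φ A'ᶜ = 1)) :
    ∀ k : ℕ, 1 ≤ k → k ≤ n →
      dk (dualFun φ) k = ∑ B ∈ (Finset.univ : Finset (Fin s)).powerset.filter
          (fun B => B.Nonempty ∧ (B.biUnion K).card = k),
          (-1 : ℚ) ^ (B.card - 1) :=
  dual_dk_eq_incl_excl_min_cut_sets_general n s φ h01 hmono K hK
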